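/- Let k be a field, R = k[x,y²,y³] localized at (x,y²,y³), with maximal ideal m = (x,y²,y³)R and J = (x,y²)R. Then for all p ≥ 1, the R/m-vector space m^p/m^{p+1} has dimension 2p+1, and hence the length λ_R(R/m^{t+1}) = (t+1)² for all t ≥ 0. -/

import Mathlib

open MvPolynomial

/-- The subring `A = k[x, y², y³]` of the polynomial ring `k[x,y]`. -/
noncomputable def Ak (k : Type*) [Field k] : Subalgebra k (MvPolynomial (Fin 2) k) :=
  Algebra.adjoin k {X 0, X 1 ^ 2, X 1 ^ 3}

/-- The element `x` of `A`. -/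
noncomputable def xA (k : Type*) [Field k] : Ak k := ⟨X 0, Algebra.subset_adjoin (by simp)⟩

/-- The element `y²` of `A`. -/
noncomputable def y2A (k : Type*) [Field k] : Ak k :=
  ⟨X 1 ^ 2, Algebra.subset_adjoin (by simp)⟩

/-- The element `y³` of `A`. -/
noncomputable def y3A (k : Type*) [Field k] : Ak k :=
  ⟨X 1 ^ 3, Algebra.subset_adjoin (by simp)⟩

/-- The maximal ideal `(x, y², y³)` of `A`. -/
noncomputable def mA (k : Type*) [Field k] : Ideal (Ak k) := Ideal.span {xA k, y2A k, y3A k}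

/-- The ideal `J = (x, y²)` of `A`. -/
noncomputable def JA (k : Type*) [Field k] : Ideal (Ak k) := Ideal.span {xA k, y2A k}

/-- The ideal `I = (x², xy²)` of `A`. -/
noncomputable def IA (k : Type*) [Field k] : Ideal (Ak k) :=
  Ideal.span {xA k ^ 2, xA k * y2A k}

set_option synthInstance.maxHeartbeats 400000

/-- The length `λ_R(S/T)` of the subquotient `S/T` of `R` attached to ideals `T ⊆ S`,
defined as the Krull dimension of the lattice of submodules; it agrees with the usual
length of the `R`-module `S/T`. -/
noncomputable def quotLength {R : Type*} [CommRing R] (S T : Ideal R) : WithBot ℕ∞ :=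
  Order.krullDim (Submodule R (↥S ⧸ (Submodule.comap S.subtype T)))


section Helpers

open Module Submodule


section General

variable {k R M : Type*}

lemma ltSeries_length_le_finrank [Field k] [AddCommGroup M] [Module k M]
    [Module.Finite k M] (s : LTSeries (Submodule k M)) : s.length ≤ Module.finrank k M := by
  have h : ∀ i : Fin (s.length + 1), (i : ℕ) ≤ Module.finrank k ↥(s i) := by
    intro i
    induction i using Fin.induction with
    | zero => simp
    | succ i ih =>
      have h2 := Submodule.finrank_lt_finrank_of_lt (s.strictMono (Fin.castSucc_lt_succ (i := i)))
      have : (i.castSucc : ℕ) = (i : ℕ) := rfl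
      rw [this] at ih
      have : ((i.succ : Fin (s.length + 1)) : ℕ) = (i : ℕ) + 1 := rfl
      omega
  have h1 := h (Fin.last _)
  simp only [Fin.val_last] at h1
  exact h1.trans (Submodule.finrank_le _)

lemma krullDim_submodule_le [Field k] [Ring R] [AddCommGroup M] [Module k M] [Module R M]
    [SMul k R] [IsScalarTower k R M] [Module.Finite k M] :
    Order.krullDim (Submodule R M) ≤ (Module.finrank k M : WithBot ℕ∞) := by
  have hsm : StrictMono (fun p : Submodule R M => p.restrictScalars k) := by
    intro p q h
    refine lt_of_le_of_ne (fun x hx => h.1 hx) (fun e => h.ne ?_)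
    exact Submodule.restrictScalars_injective k R M e
  refine (Order.krullDim_le_of_strictMono _ hsm).trans ?_
  haveI : Nonempty (Submodule k M) := ⟨⊥⟩
  rw [Order.krullDim_eq_iSup_length]
  have hb : ∀ s : LTSeries (Submodule k M), (s.length : ℕ∞) ≤ (Module.finrank k M : ℕ∞) :=
    fun s => by exact_mod_cast ltSeries_length_le_finrank s
  exact_mod_cast (WithBot.coe_le_coe).mpr (iSup_le hb)

lemma krullDim_submodule_eq [Field k] [Ring R] [AddCommGroup M] [Module k M] [Module R M]
    [SMul k R] [IsScalarTower k R M] [Module.Finite k M] (N : ℕ)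
    (hfin : Module.finrank k M = N) (c : LTSeries (Submodule R M)) (hc : c.length = N) :
    Order.krullDim (Submodule R M) = (N : WithBot ℕ∞) := by
  refine le_antisymm (hfin ▸ krullDim_submodule_le) ?_
  have := Order.LTSeries.length_le_krullDim c
  rwa [hc] at this

end General

section Combinatorics

/-- weighted degree -/
def mdeg (ab : ℕ × ℕ) : ℕ := ab.1 + ab.2 / 2

def Efin (p : ℕ) : Finset (ℕ × ℕ) :=
  ((Finset.range (2*p+2)).filter (· ≠ 1)).image (fun b => (p - b/2, b))

lemma mem_Efin {p : ℕ} {ab : ℕ × ℕ} : ab ∈ Efin p ↔ ab.2 ≠ 1 ∧ mdeg ab = p := by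
  unfold Efin mdeg
  simp only [Finset.mem_image, Finset.mem_filter, Finset.mem_range]
  constructor
  · rintro ⟨b, ⟨hb1, hb2⟩, rfl⟩
    constructor
    · exact hb2
    · simp only; omega
  · rintro ⟨h1, h2⟩
    refine ⟨ab.2, ⟨by omega, h1⟩, ?_⟩
    obtain ⟨a, b⟩ := ab
    simp only at h1 h2 ⊢
    have : b / 2 ≤ a + b / 2 := by omega
    rw [← h2]
    congr 1
    omega

lemma Efin_card (p : ℕ) : (Efin p).card = 2*p+1 := by
  unfold Efin
  rw [Finset.card_image_of_injOn (fun x _ y _ h => by simpa using congrArg Prod.snd h)]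
  rw [Finset.filter_ne', Finset.card_erase_of_mem (by simp), Finset.card_range]
  omega

def Dfin (n : ℕ) : Finset (ℕ × ℕ) := (Finset.range n).biUnion Efin

lemma mem_Dfin {n : ℕ} {ab : ℕ × ℕ} : ab ∈ Dfin n ↔ ab.2 ≠ 1 ∧ mdeg ab < n := by
  unfold Dfin
  simp only [Finset.mem_biUnion, Finset.mem_range]
  constructor
  · rintro ⟨p, hp, h⟩
    obtain ⟨h1, h2⟩ := mem_Efin.1 h
    exact ⟨h1, by omega⟩
  · rintro ⟨h1, h2⟩
    exact ⟨mdeg ab, h2, mem_Efin.2 ⟨h1, rfl⟩⟩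

lemma Dfin_card (n : ℕ) : (Dfin n).card = n^2 := by
  unfold Dfin
  rw [Finset.card_biUnion]
  · induction n with
    | zero => simp
    | succ n ih =>
      rw [Finset.sum_range_succ, ih, Efin_card]
      ring
  · intro i _ j _ hij
    simp only [Finset.disjoint_left]
    intro a hi hj
    exact hij ((mem_Efin.1 hi).2 ▸ (mem_Efin.1 hj).2.symm ▸ rfl)

lemma Dfin_subset {p q : ℕ} (h : p ≤ q) : Dfin p ⊆ Dfin q := by
  intro ab hab
  obtain ⟨h1, h2⟩ := mem_Dfin.1 hab
  exact mem_Dfin.2 ⟨h1, by omega⟩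

lemma DfinSdiff_card {p q : ℕ} (h : p ≤ q) : (Dfin q \ Dfin p).card = q^2 - p^2 := by
  rw [Finset.card_sdiff_of_subset (Dfin_subset h), Dfin_card, Dfin_card]

lemma mem_Dfin_sdiff {p q : ℕ} {ab : ℕ × ℕ} :
    ab ∈ Dfin q \ Dfin p ↔ ab.2 ≠ 1 ∧ p ≤ mdeg ab ∧ mdeg ab < q := by
  rw [Finset.mem_sdiff, mem_Dfin, mem_Dfin]
  constructor
  · rintro ⟨⟨h1, h2⟩, h3⟩
    exact ⟨h1, by by_contra h; push_neg at h; exact h3 ⟨h1, by omega⟩, h2⟩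
  · rintro ⟨h1, h2, h3⟩
    exact ⟨⟨h1, h3⟩, fun h => by omega⟩

end Combinatorics

set_option synthInstance.maxHeartbeats 1000000
set_option maxHeartbeats 1000000

section Aalg

variable {k : Type*} [Field k]

noncomputable def eAm (k : Type*) [Field k] (a b : ℕ) : Ak k :=
  xA k ^ a * y2A k ^ ((b - 3 * (b % 2)) / 2) * y3A k ^ (b % 2)

lemma eAm_val (a b : ℕ) (hb : b ≠ 1) :
    (eAm k a b : MvPolynomial (Fin 2) k) = X 0 ^ a * X 1 ^ b := by
  have hb2 : 2 * ((b - 3 * (b % 2)) / 2) + 3 * (b % 2) = b := by omega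
  have h : (eAm k a b : MvPolynomial (Fin 2) k)
      = X 0 ^ a * X 1 ^ (2 * ((b - 3 * (b % 2)) / 2) + 3 * (b % 2)) := by
    simp only [eAm, xA, y2A, y3A, MulMemClass.coe_mul, SubmonoidClass.coe_pow]
    ring
  rw [h, hb2]

lemma eAm_one : eAm k 0 0 = 1 := by
  apply Subtype.ext
  rw [eAm_val 0 0 (by omega)]
  simp

lemma eAm_mul {a b a' b' : ℕ} (hb : b ≠ 1) (hb' : b' ≠ 1) :
    eAm k a b * eAm k a' b' = eAm k (a + a') (b + b') := by
  apply Subtype.ext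
  rw [MulMemClass.coe_mul, eAm_val a b hb, eAm_val a' b' hb', eAm_val _ _ (by omega)]
  rw [pow_add, pow_add]
  ring

lemma xA_eq : xA k = eAm k 1 0 := by
  apply Subtype.ext
  rw [eAm_val 1 0 (by omega)]
  simp [xA]

lemma y2A_eq : y2A k = eAm k 0 2 := by
  apply Subtype.ext
  rw [eAm_val 0 2 (by omega)]
  simp [y2A]

lemma y3A_eq : y3A k = eAm k 0 3 := by
  apply Subtype.ext
  rw [eAm_val 0 3 (by omega)]
  simp [y3A]

/-- The `k`-span of monomials of weighted order at least `n`. -/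
noncomputable def Wk (k : Type*) [Field k] (n : ℕ) : Submodule k (Ak k) :=
  Submodule.span k {w | ∃ a b, b ≠ 1 ∧ n ≤ a + b / 2 ∧ w = eAm k a b}

lemma eAm_mem_W {n a b : ℕ} (hb : b ≠ 1) (h : n ≤ a + b / 2) : eAm k a b ∈ Wk k n :=
  Submodule.subset_span ⟨a, b, hb, h, rfl⟩

lemma W_le_W {n m : ℕ} (h : n ≤ m) : Wk k m ≤ Wk k n := by
  apply Submodule.span_mono
  rintro w ⟨a, b, hb, hab, rfl⟩
  exact ⟨a, b, hb, h.trans hab, rfl⟩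

lemma W_mul_W {m n : ℕ} : ∀ z ∈ Wk k m, ∀ w ∈ Wk k n, z * w ∈ Wk k (m + n) := by
  intro z hz
  induction hz using Submodule.span_induction with
  | mem z hzmem =>
    simp only [Set.mem_setOf_eq] at hzmem
    obtain ⟨a, b, hb, hab, rfl⟩ := hzmem
    intro w hw
    induction hw using Submodule.span_induction with
    | mem w hwmem =>
      simp only [Set.mem_setOf_eq] at hwmem
      obtain ⟨a', b', hb', hab', rfl⟩ := hwmem
      rw [eAm_mul hb hb']
      refine eAm_mem_W (by omega) (by omega)
    | zero => simp
    | add u v hu hv hu' hv' => rw [mul_add]; exact add_mem hu' hv'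
    | smul c u hu hu' => rw [mul_smul_comm]; exact Submodule.smul_mem _ _ hu'
  | zero => intro w hw; simp
  | add u v hu hv hu' hv' => intro w hw; rw [add_mul]; exact add_mem (hu' w hw) (hv' w hw)
  | smul c u hu hu' => intro w hw; rw [smul_mul_assoc]; exact Submodule.smul_mem _ _ (hu' w hw)

lemma one_mem_W0 : (1 : Ak k) ∈ Wk k 0 := by
  rw [← eAm_one]
  exact eAm_mem_W (by omega) (by omega)

lemma mem_W0 (z : Ak k) : z ∈ Wk k 0 := by
  let T : Subalgebra k (Ak k) :=
    Submodule.toSubalgebra (Wk k 0) one_mem_W0 (fun x y hx hy => by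
      have := W_mul_W x hx y hy
      simpa using this)
  have htop : Algebra.adjoin k (((↑) : Ak k → MvPolynomial (Fin 2) k) ⁻¹' {X 0, X 1 ^ 2, X 1 ^ 3})
      = ⊤ := Algebra.adjoin_adjoin_coe_preimage
  have hle : Algebra.adjoin k (((↑) : Ak k → MvPolynomial (Fin 2) k) ⁻¹' {X 0, X 1 ^ 2, X 1 ^ 3})
      ≤ T := by
    rw [Algebra.adjoin_le_iff]
    rintro ⟨w, hwA⟩ hw
    simp only [Set.mem_preimage] at hw
    rcases hw with h | h | h
    · have he : (⟨w, hwA⟩ : Ak k) = eAm k 1 0 := by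
        apply Subtype.ext
        rw [eAm_val 1 0 (by omega)]
        simpa using h
      show (⟨w, hwA⟩ : Ak k) ∈ Wk k 0
      rw [he]; exact eAm_mem_W (by omega) (by omega)
    · have he : (⟨w, hwA⟩ : Ak k) = eAm k 0 2 := by
        apply Subtype.ext
        rw [eAm_val 0 2 (by omega)]
        simpa using h
      show (⟨w, hwA⟩ : Ak k) ∈ Wk k 0
      rw [he]; exact eAm_mem_W (by omega) (by omega)
    · rw [Set.mem_singleton_iff] at h
      have he : (⟨w, hwA⟩ : Ak k) = eAm k 0 3 := by
        apply Subtype.ext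
        rw [eAm_val 0 3 (by omega)]
        simpa using h
      show (⟨w, hwA⟩ : Ak k) ∈ Wk k 0
      rw [he]; exact eAm_mem_W (by omega) (by omega)
  have : z ∈ T := by
    rw [htop] at hle
    exact hle (by trivial)
  exact this

end Aalg

section Aalg2

variable {k : Type*} [Field k]

lemma gen_mem_mA_x : xA k ∈ mA k := Ideal.subset_span (by simp)
lemma gen_mem_mA_y2 : y2A k ∈ mA k := Ideal.subset_span (by simp)
lemma gen_mem_mA_y3 : y3A k ∈ mA k := Ideal.subset_span (by simp)

lemma W_le_mA_pow (n : ℕ) : ∀ z ∈ Wk k n, z ∈ (mA k) ^ n := by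
  intro z hz
  induction hz using Submodule.span_induction with
  | mem w hwmem =>
    simp only [Set.mem_setOf_eq] at hwmem
    obtain ⟨a, b, hb, hab, rfl⟩ := hwmem
    have hmem : eAm k a b ∈ (mA k) ^ (a + ((b - 3 * (b % 2)) / 2) + (b % 2)) := by
      rw [pow_add, pow_add]
      exact Ideal.mul_mem_mul
        (Ideal.mul_mem_mul (Ideal.pow_mem_pow gen_mem_mA_x a)
          (Ideal.pow_mem_pow gen_mem_mA_y2 _)) (Ideal.pow_mem_pow gen_mem_mA_y3 _)
    have harith : a + ((b - 3 * (b % 2)) / 2) + (b % 2) = a + b / 2 := by omega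
    rw [harith] at hmem
    exact Ideal.pow_le_pow_right hab hmem
  | zero => exact zero_mem _
  | add u v hu hv hu' hv' => exact add_mem hu' hv'
  | smul c u hu hu' =>
    rw [← algebraMap_smul (Ak k) c u]
    exact Submodule.smul_mem _ _ hu'

lemma mA_le_W1 : ∀ z ∈ mA k, z ∈ Wk k 1 := by
  intro z hz
  induction hz using Submodule.span_induction with
  | mem w hwmem =>
    rcases hwmem with h | h | h
    · subst h; rw [xA_eq]; exact eAm_mem_W (by omega) (by omega)
    · subst h; rw [y2A_eq]; exact eAm_mem_W (by omega) (by omega)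
    · rw [Set.mem_singleton_iff] at h; subst h
      rw [y3A_eq]; exact eAm_mem_W (by omega) (by omega)
  | zero => exact zero_mem _
  | add u v hu hv hu' hv' => exact add_mem hu' hv'
  | smul a u hu hu' =>
    have := W_mul_W a (mem_W0 a) u hu'
    simpa using this

lemma mA_pow_le_W (n : ℕ) : ∀ z ∈ (mA k) ^ n, z ∈ Wk k n := by
  induction n with
  | zero => intro z _; exact mem_W0 z
  | succ n ih =>
    intro z hz
    rw [pow_succ] at hz
    refine Submodule.mul_induction_on hz (fun r hr s hs => ?_) (fun x y hx hy => add_mem hx hy)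
    exact W_mul_W r (ih r hr) s (mA_le_W1 s hs)

/-- The constant term character. -/
noncomputable def epsA (k : Type*) [Field k] : Ak k →ₐ[k] k :=
  (MvPolynomial.aeval (fun _ : Fin 2 => (0 : k))).comp (Ak k).val

lemma epsA_eAm {a b : ℕ} (hb : b ≠ 1) :
    epsA k (eAm k a b) = if a = 0 ∧ b = 0 then 1 else 0 := by
  unfold epsA
  simp only [AlgHom.comp_apply, Subalgebra.coe_val]
  rw [show ((eAm k a b : Ak k) : MvPolynomial (Fin 2) k) = X 0 ^ a * X 1 ^ b from
    eAm_val a b hb]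
  rw [map_mul, map_pow, map_pow, aeval_X, aeval_X]
  rcases Nat.eq_zero_or_pos a with rfl | ha
  · rcases Nat.eq_zero_or_pos b with rfl | hbb
    · simp
    · rw [zero_pow (by omega : b ≠ 0), if_neg (by omega)]
      simp
  · rw [zero_pow (by omega : a ≠ 0), if_neg (by omega : ¬ (a = 0 ∧ b = 0))]
    simp

lemma sub_eps_mem_mA (z : Ak k) : z - (epsA k z) • 1 ∈ mA k := by
  have h0 := mem_W0 z
  induction h0 using Submodule.span_induction with
  | mem w hwmem =>
    simp only [Set.mem_setOf_eq] at hwmem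
    obtain ⟨a, b, hb, _, rfl⟩ := hwmem
    rw [epsA_eAm hb]
    by_cases hab : a = 0 ∧ b = 0
    · obtain ⟨rfl, rfl⟩ := hab
      rw [if_pos ⟨rfl, rfl⟩, eAm_one, one_smul, sub_self]
      exact zero_mem _
    · rw [if_neg hab, zero_smul, sub_zero]
      have : eAm k a b ∈ Wk k 1 := eAm_mem_W hb (by omega)
      have := W_le_mA_pow 1 _ this
      rwa [pow_one] at this
  | zero => simp only [map_zero, zero_smul, sub_zero]; exact zero_mem _
  | add u v hu hv hu' hv' =>
    have : u + v - (epsA k (u + v)) • 1 = (u - epsA k u • 1) + (v - epsA k v • 1) := by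
      rw [map_add, add_smul]; ring
    rw [this]; exact add_mem hu' hv'
  | smul c u hu hu' =>
    have : c • u - (epsA k (c • u)) • 1 = c • (u - epsA k u • 1) := by
      rw [map_smul, smul_sub, smul_smul, smul_eq_mul]
    rw [this, ← algebraMap_smul (Ak k) c]
    exact Submodule.smul_mem _ _ hu'

lemma mA_isMaximal [(mA k).IsPrime] : (mA k).IsMaximal := by
  rw [Ideal.isMaximal_iff]
  constructor
  · intro h1
    exact (Ideal.IsPrime.ne_top ‹_›) (Ideal.eq_top_iff_one _ |>.mpr h1)
  · intro J x hle hx hxJ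
    have hc : epsA k x ≠ 0 := by
      intro h0
      apply hx
      have := sub_eps_mem_mA x
      rwa [h0, zero_smul, sub_zero] at this
    have h1 : (1 : Ak k) = (epsA k x)⁻¹ • x - (epsA k x)⁻¹ • (x - epsA k x • 1) := by
      rw [smul_sub, smul_smul, inv_mul_cancel₀ hc, one_smul]
      ring
    rw [h1]
    refine sub_mem ?_ ?_
    · rw [← algebraMap_smul (Ak k) ((epsA k x)⁻¹) x]
      exact J.smul_mem _ hxJ
    · rw [← algebraMap_smul (Ak k) ((epsA k x)⁻¹)]
      exact J.smul_mem _ (hle (sub_eps_mem_mA x))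

end Aalg2

section Indep

variable {k : Type*} [Field k]

noncomputable def monF (k : Type*) [Field k] (ab : ℕ × ℕ) : MvPolynomial (Fin 2) k :=
  X 0 ^ ab.1 * X 1 ^ ab.2

lemma monF_eq (ab : ℕ × ℕ) :
    monF k ab = monomial (Finsupp.single 0 ab.1 + Finsupp.single 1 ab.2) (1 : k) := by
  unfold monF
  rw [X_pow_eq_monomial, X_pow_eq_monomial, monomial_mul, one_mul]

lemma monF_li : LinearIndependent k (monF k) := by
  have hinj : Function.Injective
      (fun ab : ℕ × ℕ => Finsupp.single (0 : Fin 2) ab.1 + Finsupp.single (1 : Fin 2) ab.2) := by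
    intro ab cd h
    have h0 := congrArg (fun f => f (0 : Fin 2)) h
    have h1 := congrArg (fun f => f (1 : Fin 2)) h
    simp only [Finsupp.add_apply, Finsupp.single_apply, if_true,
      if_neg (by decide : ¬ ((1 : Fin 2) = 0)), if_neg (by decide : ¬ ((0 : Fin 2) = 1)),
      add_zero, zero_add] at h0 h1
    exact Prod.ext (by omega) (by omega)
  have := ((MvPolynomial.basisMonomials (Fin 2) k).linearIndependent).comp _ hinj
  have heq : (⇑(MvPolynomial.basisMonomials (Fin 2) k) ∘
      fun ab : ℕ × ℕ => Finsupp.single (0 : Fin 2) ab.1 + Finsupp.single (1 : Fin 2) ab.2)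
      = monF k := by
    funext ab
    rw [Function.comp_apply, coe_basisMonomials, monF_eq]
  rwa [heq] at this

lemma monF_val_eAm {a b : ℕ} (hb : b ≠ 1) :
    ((eAm k a b : Ak k) : MvPolynomial (Fin 2) k) = monF k (a, b) := eAm_val a b hb

lemma eAm_combo_W {q : ℕ} {ι : Type*} [Fintype ι] (f : ι → ℕ × ℕ) (hf : Function.Injective f)
    (hlow : ∀ i, (f i).2 ≠ 1 ∧ mdeg (f i) < q) (g : ι → k)
    (h : (∑ i, g i • eAm k (f i).1 (f i).2) ∈ Wk k q) : ∀ i, g i = 0 := by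
  classical
  let V : Ak k →ₗ[k] MvPolynomial (Fin 2) k := (Ak k).val.toLinearMap
  have hVsum : V (∑ i, g i • eAm k (f i).1 (f i).2) = ∑ i, g i • monF k (f i) := by
    rw [map_sum]
    refine Finset.sum_congr rfl (fun i _ => ?_)
    rw [map_smul]
    congr 1
    exact monF_val_eAm (hlow i).1
  have hhigh : V (∑ i, g i • eAm k (f i).1 (f i).2) ∈
      Submodule.span k (monF k '' {ab | ab.2 ≠ 1 ∧ q ≤ mdeg ab}) := by
    have hmem : V (∑ i, g i • eAm k (f i).1 (f i).2) ∈ Submodule.map V (Wk k q) :=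
      Submodule.mem_map_of_mem h
    rw [Wk, Submodule.map_span] at hmem
    refine Submodule.span_mono ?_ hmem
    rintro w ⟨u, ⟨a, b, hb, hab, rfl⟩, rfl⟩
    exact ⟨(a, b), ⟨hb, hab⟩, (monF_val_eAm hb).symm⟩
  rw [hVsum] at hhigh
  have hlowmem : (∑ i, g i • monF k (f i)) ∈ Submodule.span k (monF k '' Set.range f) := by
    refine Submodule.sum_mem _ (fun i _ => Submodule.smul_mem _ _ ?_)
    exact Submodule.subset_span (Set.mem_image_of_mem _ (Set.mem_range_self i))
  have hdisj : Disjoint (Set.range f) {ab : ℕ × ℕ | ab.2 ≠ 1 ∧ q ≤ mdeg ab} := by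
    rw [Set.disjoint_left]
    rintro ab ⟨i, rfl⟩ ⟨_, hq⟩
    exact absurd hq (by have := (hlow i).2; omega)
  have hzero : (∑ i, g i • monF k (f i)) = 0 := by
    have := (monF_li.disjoint_span_image hdisj).le_bot ⟨hlowmem, hhigh⟩
    simpa using this
  have hli : LinearIndependent k (monF k ∘ f) := monF_li.comp f hf
  exact Fintype.linearIndependent_iff.mp hli g (by simpa using hzero)

end Indep

section Localization

variable {k : Type*} [Field k] [(mA k).IsPrime]
variable {R : Type*} [CommRing R] [Algebra (Ak k) R] [IsLocalization.AtPrime R (mA k)]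

lemma exists_unit_decomp {s : Ak k} (hs : s ∉ mA k) :
    ∃ c t, t ∈ mA k ∧ c * s + t = 1 := by
  obtain ⟨y, i, hi, hyi⟩ := (mA_isMaximal (k := k)).exists_inv hs
  exact ⟨y, i, hi, hyi⟩

lemma clear_denominator {n : ℕ} {s a : Ak k} (hs : s ∉ mA k) (h : s * a ∈ (mA k) ^ n) :
    a ∈ (mA k) ^ n := by
  obtain ⟨c, t, ht, h1⟩ := exists_unit_decomp hs
  have hgeom : ∀ m : ℕ, ∃ u, (c * s + t) ^ m = u * s + t ^ m := by
    intro m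
    induction m with
    | zero => exact ⟨0, by ring⟩
    | succ m ih =>
      obtain ⟨u, hu⟩ := ih
      exact ⟨u * c * s + u * t + c * t ^ m, by rw [pow_succ, hu]; ring⟩
  obtain ⟨u, hu⟩ := hgeom n
  have key : a = a * t ^ n + (s * a) * u := by
    have h2 : (c * s + t) ^ n = 1 := by rw [h1, one_pow]
    calc a = a * ((c * s + t) ^ n) := by rw [h2, mul_one]
    _ = a * (u * s + t ^ n) := by rw [hu]
    _ = a * t ^ n + (s * a) * u := by ring
  rw [key]
  exact add_mem (Ideal.mul_mem_left _ _ (Ideal.pow_mem_pow ht n))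
    (Ideal.mul_mem_right _ _ h)

lemma comap_pow_mem {n : ℕ} {a : Ak k}
    (h : algebraMap (Ak k) R a ∈ (Ideal.map (algebraMap (Ak k) R) (mA k)) ^ n) :
    a ∈ (mA k) ^ n := by
  rw [← Ideal.map_pow] at h
  rw [IsLocalization.mem_map_algebraMap_iff (mA k).primeCompl R] at h
  obtain ⟨⟨⟨i, hi⟩, s⟩, hx⟩ := h
  rw [← map_mul] at hx
  obtain ⟨c, hc⟩ := (IsLocalization.eq_iff_exists (mA k).primeCompl R).mp hx
  have hmem : ((c : Ak k) * s) * a ∈ (mA k) ^ n := by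
    have heq : ((c : Ak k) * s) * a = (c : Ak k) * i := by
      rw [← hc]; ring
    rw [heq]
    exact Ideal.mul_mem_left _ _ hi
  refine clear_denominator (fun hcs => ?_) hmem
  exact absurd hcs (mul_mem c.2 s.2)

lemma approx_mem_pow (n : ℕ) (r : R) :
    ∃ a, r - algebraMap (Ak k) R a ∈ (Ideal.map (algebraMap (Ak k) R) (mA k)) ^ n := by
  obtain ⟨a, s, rfl⟩ := IsLocalization.exists_mk'_eq (M := (mA k).primeCompl) r
  obtain ⟨c, t, ht, h1⟩ := exists_unit_decomp (s := (s : Ak k)) s.2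
  refine ⟨a * (c * (∑ i ∈ Finset.range n, t ^ i)), ?_⟩
  have hgeom : (∑ i ∈ Finset.range n, t ^ i) * (t - 1) = t ^ n - 1 := geom_sum_mul t n
  have key : a - (a * (c * ∑ i ∈ Finset.range n, t ^ i)) * s = a * t ^ n := by
    have hcs : c * (s : Ak k) = 1 - t := by rw [← h1]; ring
    have h2 : (c * ∑ i ∈ Finset.range n, t ^ i) * s = 1 - t ^ n := by
      calc (c * ∑ i ∈ Finset.range n, t ^ i) * s
          = (∑ i ∈ Finset.range n, t ^ i) * (c * s) := by ring
      _ = (∑ i ∈ Finset.range n, t ^ i) * (1 - t) := by rw [hcs]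
      _ = -((∑ i ∈ Finset.range n, t ^ i) * (t - 1)) := by ring
      _ = 1 - t ^ n := by rw [hgeom]; ring
    calc a - (a * (c * ∑ i ∈ Finset.range n, t ^ i)) * s
        = a * (1 - (c * ∑ i ∈ Finset.range n, t ^ i) * s) := by ring
    _ = a * t ^ n := by rw [h2]; ring
  have hspec : IsLocalization.mk' R a s * algebraMap (Ak k) R (s : Ak k)
      = algebraMap (Ak k) R a := IsLocalization.mk'_spec R a s
  obtain ⟨v, hv⟩ := IsLocalization.map_units R s
  set z := IsLocalization.mk' R a s
    - algebraMap (Ak k) R (a * (c * ∑ i ∈ Finset.range n, t ^ i)) with hz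
  have hzs : z * algebraMap (Ak k) R (s : Ak k) = algebraMap (Ak k) R (a * t ^ n) := by
    rw [hz, sub_mul, hspec, ← map_mul, ← map_sub, key]
  have hmem : z * algebraMap (Ak k) R (s : Ak k)
      ∈ (Ideal.map (algebraMap (Ak k) R) (mA k)) ^ n := by
    rw [hzs, ← Ideal.map_pow]
    exact Ideal.mem_map_of_mem _ (Ideal.mul_mem_left _ _ (Ideal.pow_mem_pow ht n))
  have hzeq : z = (z * algebraMap (Ak k) R (s : Ak k)) * (↑v⁻¹ : R) := by
    rw [← hv]
    exact (Units.mul_inv_cancel_right z v).symm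
  rw [hzeq]
  exact Ideal.mul_mem_right _ _ hmem

lemma residue_decomp (r : R) :
    ∃ c : k, r - algebraMap (Ak k) R (algebraMap k (Ak k) c)
      ∈ Ideal.map (algebraMap (Ak k) R) (mA k) := by
  obtain ⟨a, ha⟩ := approx_mem_pow (k := k) (R := R) 1 r
  rw [pow_one] at ha
  refine ⟨epsA k a, ?_⟩
  have h2 := sub_eps_mem_mA a
  have heq : r - algebraMap (Ak k) R (algebraMap k (Ak k) (epsA k a))
      = (r - algebraMap (Ak k) R a) + algebraMap (Ak k) R (a - epsA k a • 1) := by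
    rw [map_sub]
    have h3 : algebraMap k (Ak k) (epsA k a) = epsA k a • (1 : Ak k) :=
      Algebra.algebraMap_eq_smul_one _
    rw [h3]
    ring
  rw [heq]
  exact add_mem ha (Ideal.mem_map_of_mem _ h2)

end Localization

set_option linter.unusedSectionVars false

section Main

variable (k : Type*) [Field k] [(mA k).IsPrime]
variable (R : Type*) [CommRing R] [Algebra (Ak k) R] [Algebra k R] [IsScalarTower k (Ak k) R]
variable [IsLocalization.AtPrime R (mA k)]
variable (p q : ℕ)

noncomputable abbrev mIdeal : Ideal R := Ideal.map (algebraMap (Ak k) R) (mA k)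

noncomputable abbrev ModPQ :=
  ↥(mIdeal k R ^ p) ⧸ Submodule.comap (mIdeal k R ^ p).subtype (mIdeal k R ^ q)

lemma algAk_ksmul (c : k) (w : Ak k) :
    algebraMap (Ak k) R (c • w) = c • algebraMap (Ak k) R w := by
  rw [Algebra.smul_def c w, map_mul, ← IsScalarTower.algebraMap_apply, ← Algebra.smul_def]

lemma algW_mem {j : ℕ} (hpj : p ≤ j) {w : Ak k} (hw : w ∈ Wk k j) :
    algebraMap (Ak k) R w ∈ mIdeal k R ^ p := by
  have h1 : w ∈ (mA k) ^ j := W_le_mA_pow j w hw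
  have h2 : w ∈ (mA k) ^ p := Ideal.pow_le_pow_right hpj h1
  rw [← Ideal.map_pow]
  exact Ideal.mem_map_of_mem _ h2

noncomputable def Lmap : ↥(Wk k p) →ₗ[k] ModPQ k R p q where
  toFun w := Submodule.Quotient.mk ⟨algebraMap (Ak k) R (w : Ak k), algW_mem k R p le_rfl w.2⟩
  map_add' w1 w2 := by
    have h : (⟨algebraMap (Ak k) R ((w1 + w2 : ↥(Wk k p)) : Ak k),
          algW_mem k R p le_rfl (w1 + w2).2⟩ : ↥(mIdeal k R ^ p))
        = ⟨algebraMap (Ak k) R (w1 : Ak k), algW_mem k R p le_rfl w1.2⟩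
          + ⟨algebraMap (Ak k) R (w2 : Ak k), algW_mem k R p le_rfl w2.2⟩ := by
      apply Subtype.ext
      show algebraMap (Ak k) R ((w1 : Ak k) + (w2 : Ak k))
        = algebraMap (Ak k) R (w1 : Ak k) + algebraMap (Ak k) R (w2 : Ak k)
      rw [map_add]
    show Submodule.Quotient.mk _ = Submodule.Quotient.mk _ + Submodule.Quotient.mk _
    rw [h, Submodule.Quotient.mk_add]
  map_smul' c w := by
    have h : (⟨algebraMap (Ak k) R ((c • w : ↥(Wk k p)) : Ak k),
          algW_mem k R p le_rfl (c • w).2⟩ : ↥(mIdeal k R ^ p))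
        = c • ⟨algebraMap (Ak k) R (w : Ak k), algW_mem k R p le_rfl w.2⟩ := by
      apply Subtype.ext
      show algebraMap (Ak k) R (c • (w : Ak k)) = c • algebraMap (Ak k) R (w : Ak k)
      exact algAk_ksmul k R c w
    show Submodule.Quotient.mk _ = _
    rw [h, Submodule.Quotient.mk_smul]
    rfl

lemma Lmap_mk {w : Ak k} (hw : w ∈ Wk k p) (hmem : algebraMap (Ak k) R w ∈ mIdeal k R ^ p) :
    (Submodule.Quotient.mk ⟨algebraMap (Ak k) R w, hmem⟩ : ModPQ k R p q)
      = Lmap k R p q ⟨w, hw⟩ := rfl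

lemma Lmap_high {w : Ak k} (hw : w ∈ Wk k p) (hwq : w ∈ Wk k q) :
    Lmap k R p q ⟨w, hw⟩ = 0 := by
  rw [← Lmap_mk k R p q hw (algW_mem k R p le_rfl hw), Submodule.Quotient.mk_eq_zero]
  have h1 : algebraMap (Ak k) R w ∈ mIdeal k R ^ q := by
    rw [← Ideal.map_pow]
    exact Ideal.mem_map_of_mem _ (W_le_mA_pow q w hwq)
  exact h1

noncomputable def gEl (ab : ℕ × ℕ) : ModPQ k R p q :=
  if h : ab.2 ≠ 1 ∧ p ≤ mdeg ab then
    Lmap k R p q ⟨eAm k ab.1 ab.2, eAm_mem_W h.1 h.2⟩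
  else 0

lemma gEl_spec {ab : ℕ × ℕ} (h : ab.2 ≠ 1 ∧ p ≤ mdeg ab) :
    gEl k R p q ab = Lmap k R p q ⟨eAm k ab.1 ab.2, eAm_mem_W h.1 h.2⟩ := dif_pos h

/-- Images of monomials of order at least `j`. -/
noncomputable def UU (j : ℕ) : Submodule k (ModPQ k R p q) :=
  Submodule.span k (gEl k R p q '' {ab | j ≤ mdeg ab})

lemma UU_antitone {j j' : ℕ} (h : j ≤ j') : UU k R p q j' ≤ UU k R p q j :=
  Submodule.span_mono (Set.image_mono (fun ab hab => le_trans h hab))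

lemma mem_U (hpq : p ≤ q) : ∀ (d j : ℕ), q ≤ j + d → p ≤ j →
    ∀ (z : R) (hzj : z ∈ mIdeal k R ^ j) (hzp : z ∈ mIdeal k R ^ p),
    (Submodule.Quotient.mk ⟨z, hzp⟩ : ModPQ k R p q) ∈ UU k R p q j := by
  have base : ∀ (j : ℕ), q ≤ j → ∀ (z : R) (hzj : z ∈ mIdeal k R ^ j)
      (hzp : z ∈ mIdeal k R ^ p),
      (Submodule.Quotient.mk ⟨z, hzp⟩ : ModPQ k R p q) ∈ UU k R p q j := by
    intro j hqj z hzj hzp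
    have hzq : z ∈ mIdeal k R ^ q := Ideal.pow_le_pow_right hqj hzj
    have : (Submodule.Quotient.mk ⟨z, hzp⟩ : ModPQ k R p q) = 0 := by
      rw [Submodule.Quotient.mk_eq_zero]
      exact hzq
    rw [this]
    exact zero_mem _
  intro d
  induction d with
  | zero => intro j hqj _; exact base j (by omega)
  | succ d ih =>
    intro j hqd hpj z hzj hzp
    by_cases hjq : q ≤ j
    · exact base j hjq z hzj hzp
    push_neg at hjq
    -- inner claim about elements of the form algebraMap w with w ∈ Wk k j
    have inner : ∀ (w : Ak k) (hw : w ∈ Wk k j)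
        (hxp : algebraMap (Ak k) R w ∈ mIdeal k R ^ p),
        (Submodule.Quotient.mk ⟨algebraMap (Ak k) R w, hxp⟩ : ModPQ k R p q)
          ∈ UU k R p q j := by
      intro w hw
      induction hw using Submodule.span_induction with
      | mem w hwmem =>
        simp only [Set.mem_setOf_eq] at hwmem
        obtain ⟨a, b, hb, hab, rfl⟩ := hwmem
        intro hxp
        have hcond : (a, b).2 ≠ 1 ∧ p ≤ mdeg (a, b) := ⟨hb, by unfold mdeg; omega⟩
        have : (Submodule.Quotient.mk ⟨algebraMap (Ak k) R (eAm k a b), hxp⟩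
            : ModPQ k R p q) = gEl k R p q (a, b) := by
          rw [gEl_spec k R p q hcond]
          rfl
        rw [this]
        exact Submodule.subset_span ⟨(a, b), by unfold mdeg; simpa using hab, rfl⟩
      | zero =>
        intro hxp
        have : (⟨algebraMap (Ak k) R 0, hxp⟩ : ↥(mIdeal k R ^ p)) = 0 :=
          Subtype.ext (map_zero _)
        rw [this, Submodule.Quotient.mk_zero]
        exact zero_mem _
      | add w1 w2 h1 h2 ih1 ih2 =>
        intro hxp
        have m1 : algebraMap (Ak k) R w1 ∈ mIdeal k R ^ p := algW_mem k R p hpj h1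
        have m2 : algebraMap (Ak k) R w2 ∈ mIdeal k R ^ p := algW_mem k R p hpj h2
        have : (⟨algebraMap (Ak k) R (w1 + w2), hxp⟩ : ↥(mIdeal k R ^ p))
            = ⟨algebraMap (Ak k) R w1, m1⟩ + ⟨algebraMap (Ak k) R w2, m2⟩ :=
          Subtype.ext (map_add _ _ _)
        rw [this, Submodule.Quotient.mk_add]
        exact add_mem (ih1 m1) (ih2 m2)
      | smul c w hwmem ihw =>
        intro hxp
        have mw : algebraMap (Ak k) R w ∈ mIdeal k R ^ p := algW_mem k R p hpj hwmem
        have : (⟨algebraMap (Ak k) R (c • w), hxp⟩ : ↥(mIdeal k R ^ p))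
            = c • ⟨algebraMap (Ak k) R w, mw⟩ :=
          Subtype.ext (algAk_ksmul k R c w)
        rw [this, Submodule.Quotient.mk_smul]
        exact Submodule.smul_mem _ _ (ihw mw)
    -- main induction on z ∈ m^j
    have hspan : z ∈ Submodule.span R ((algebraMap (Ak k) R) '' ((mA k) ^ j : Ideal (Ak k))) := by
      rw [← Ideal.map_pow] at hzj
      exact hzj
    clear hzj
    revert hzp
    induction hspan using Submodule.span_induction with
    | mem x hx =>
      obtain ⟨w, hwj, rfl⟩ := hx
      intro hxp
      exact inner w (mA_pow_le_W j w hwj) hxp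
    | zero =>
      intro hzp
      have : (⟨(0 : R), hzp⟩ : ↥(mIdeal k R ^ p)) = 0 := rfl
      rw [this, Submodule.Quotient.mk_zero]
      exact zero_mem _
    | add x y hx hy ihx ihy =>
      intro hzp
      have hxj : x ∈ mIdeal k R ^ j := by
        rw [← Ideal.map_pow]; exact hx
      have hyj : y ∈ mIdeal k R ^ j := by
        rw [← Ideal.map_pow]; exact hy
      have mx : x ∈ mIdeal k R ^ p := Ideal.pow_le_pow_right hpj hxj
      have my : y ∈ mIdeal k R ^ p := Ideal.pow_le_pow_right hpj hyj
      have : (⟨x + y, hzp⟩ : ↥(mIdeal k R ^ p)) = ⟨x, mx⟩ + ⟨y, my⟩ := rfl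
      rw [this, Submodule.Quotient.mk_add]
      exact add_mem (ihx mx) (ihy my)
    | smul r x hx ihx =>
      intro hzp
      have hxj : x ∈ mIdeal k R ^ j := by
        rw [← Ideal.map_pow]; exact hx
      have mx : x ∈ mIdeal k R ^ p := Ideal.pow_le_pow_right hpj hxj
      obtain ⟨c, hc⟩ := residue_decomp (k := k) (R := R) r
      set μ := r - algebraMap (Ak k) R (algebraMap k (Ak k) c) with hμ
      have hμx : μ * x ∈ mIdeal k R ^ (j + 1) := by
        rw [pow_succ, mul_comm μ x]
        exact Ideal.mul_mem_mul hxj hc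
      have hμxp : μ * x ∈ mIdeal k R ^ p :=
        Ideal.pow_le_pow_right (by omega) hμx
      have hdec : (⟨r • x, hzp⟩ : ↥(mIdeal k R ^ p)) = c • ⟨x, mx⟩ + ⟨μ * x, hμxp⟩ := by
        apply Subtype.ext
        show r • x = c • x + μ * x
        rw [smul_eq_mul, Algebra.smul_def, IsScalarTower.algebraMap_apply k (Ak k) R, hμ]
        ring
      rw [hdec, Submodule.Quotient.mk_add, Submodule.Quotient.mk_smul]
      refine add_mem (Submodule.smul_mem _ _ (ihx mx)) ?_
      have hjq1 : q ≤ (j + 1) + d := by omega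
      have hj1 : p ≤ j + 1 := by omega
      exact UU_antitone k R p q (by omega) (ih (j + 1) hjq1 hj1 (μ * x) hμx hμxp)

end Main

section Main2

variable (k : Type*) [Field k] [(mA k).IsPrime]
variable (R : Type*) [CommRing R] [Algebra (Ak k) R] [Algebra k R] [IsScalarTower k (Ak k) R]
variable [IsLocalization.AtPrime R (mA k)]
variable (p q : ℕ)

lemma UU_top (hpq : p ≤ q) : UU k R p q p = ⊤ := by
  rw [eq_top_iff]
  rintro x -
  obtain ⟨⟨z, hzp⟩, rfl⟩ := Submodule.Quotient.mk_surjective _ x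
  exact mem_U k R p q hpq (q - p) p (by omega) le_rfl z hzp hzp

lemma gEl_li (hpq : p ≤ q) :
    LinearIndependent k (fun i : ↥(Dfin q \ Dfin p) => gEl k R p q i.1) := by
  rw [Fintype.linearIndependent_iff]
  intro g hg
  have hmem : ∀ i : ↥(Dfin q \ Dfin p), (i.1.2 ≠ 1 ∧ p ≤ mdeg i.1) := fun i => by
    have h := mem_Dfin_sdiff.mp i.2
    exact ⟨h.1, h.2.1⟩
  set u : ↥(Dfin q \ Dfin p) → ↥(Wk k p) :=
    fun i => ⟨eAm k i.1.1 i.1.2, eAm_mem_W (hmem i).1 (hmem i).2⟩ with hu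
  have hsum : Lmap k R p q (∑ i, g i • u i) = 0 := by
    rw [map_sum]
    have : ∀ i : ↥(Dfin q \ Dfin p), Lmap k R p q (g i • u i) = g i • gEl k R p q i.1 := by
      intro i
      rw [map_smul, gEl_spec k R p q (hmem i)]
    rw [Finset.sum_congr rfl (fun i _ => this i)]
    exact hg
  set w := (∑ i, g i • u i) with hw
  have hker : algebraMap (Ak k) R (w : Ak k) ∈ mIdeal k R ^ q := by
    have h0 : Lmap k R p q w
        = Submodule.Quotient.mk ⟨algebraMap (Ak k) R (w : Ak k),
            algW_mem k R p le_rfl w.2⟩ := rfl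
    rw [h0, Submodule.Quotient.mk_eq_zero] at hsum
    exact hsum
  have hWq : (w : Ak k) ∈ Wk k q := mA_pow_le_W q _ (comap_pow_mem hker)
  have hw1 : (w : Ak k) = ∑ i, g i • eAm k i.1.1 i.1.2 := by
    rw [hw]
    simp [hu]
  rw [hw1] at hWq
  exact eAm_combo_W (fun i : ↥(Dfin q \ Dfin p) => i.1) Subtype.val_injective
    (fun i => ⟨(hmem i).1, (mem_Dfin_sdiff.mp i.2).2.2⟩) g hWq

lemma gEl_zero_of_not_sdiff {ab : ℕ × ℕ} (hp : p ≤ mdeg ab) (hd : ab ∉ Dfin q \ Dfin p) :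
    gEl k R p q ab = 0 := by
  by_cases hc : ab.2 ≠ 1 ∧ p ≤ mdeg ab
  · have hq : q ≤ mdeg ab := by
      by_contra hlt
      push_neg at hlt
      exact hd (mem_Dfin_sdiff.mpr ⟨hc.1, hc.2, hlt⟩)
    rw [gEl_spec k R p q hc]
    exact Lmap_high k R p q _ (eAm_mem_W hc.1 hq)
  · exact dif_neg hc

lemma span_gEl_eq (T : Set (ℕ × ℕ)) (hTp : ∀ ab ∈ T, p ≤ mdeg ab) :
    Submodule.span k (gEl k R p q '' T)
      = Submodule.span k ((fun i : ↥(Dfin q \ Dfin p) => gEl k R p q i.1)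
          '' {i | i.1 ∈ T}) := by
  apply le_antisymm
  · rw [Submodule.span_le]
    rintro y ⟨ab, habT, rfl⟩
    by_cases hd : ab ∈ Dfin q \ Dfin p
    · exact Submodule.subset_span ⟨⟨ab, hd⟩, habT, rfl⟩
    · rw [gEl_zero_of_not_sdiff k R p q (hTp ab habT) hd]
      exact zero_mem _
  · rw [Submodule.span_le]
    rintro y ⟨i, hiT, rfl⟩
    exact Submodule.subset_span ⟨i.1, hiT, rfl⟩

noncomputable def gBasis (hpq : p ≤ q) : Basis ↥(Dfin q \ Dfin p) k (ModPQ k R p q) := by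
  refine Basis.mk (gEl_li k R p q hpq) ?_
  have h1 : UU k R p q p ≤ Submodule.span k
      (Set.range fun i : ↥(Dfin q \ Dfin p) => gEl k R p q i.1) := by
    rw [UU, span_gEl_eq k R p q {ab | p ≤ mdeg ab} (fun ab hab => hab)]
    refine Submodule.span_mono ?_
    rintro y ⟨i, _, rfl⟩
    exact Set.mem_range_self i
  rw [UU_top k R p q hpq] at h1
  exact h1

lemma modPQ_finrank (hpq : p ≤ q) : Module.finrank k (ModPQ k R p q) = q ^ 2 - p ^ 2 := by
  rw [Module.finrank_eq_card_basis (gBasis k R p q hpq), Fintype.card_coe, DfinSdiff_card hpq]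

end Main2

section Chain

variable (k : Type*) [Field k] [(mA k).IsPrime]
variable (R : Type*) [CommRing R] [Algebra (Ak k) R] [Algebra k R] [IsScalarTower k (Ak k) R]
variable [IsLocalization.AtPrime R (mA k)]
variable (p q : ℕ)

lemma smul_gEl_mem (hpq : p ≤ q) {μ : R} (hμ : μ ∈ mIdeal k R) (ab : ℕ × ℕ) :
    μ • gEl k R p q ab ∈ UU k R p q (mdeg ab + 1) := by
  by_cases hc : ab.2 ≠ 1 ∧ p ≤ mdeg ab
  · have he : eAm k ab.1 ab.2 ∈ (mA k) ^ (mdeg ab) :=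
      W_le_mA_pow _ _ (eAm_mem_W hc.1 le_rfl)
    have halg : algebraMap (Ak k) R (eAm k ab.1 ab.2) ∈ mIdeal k R ^ (mdeg ab) := by
      rw [← Ideal.map_pow]
      exact Ideal.mem_map_of_mem _ he
    have hz1 : μ * algebraMap (Ak k) R (eAm k ab.1 ab.2) ∈ mIdeal k R ^ (mdeg ab + 1) := by
      rw [pow_succ, mul_comm μ (algebraMap (Ak k) R (eAm k ab.1 ab.2))]
      exact Ideal.mul_mem_mul halg hμ
    have hzp : μ * algebraMap (Ak k) R (eAm k ab.1 ab.2) ∈ mIdeal k R ^ p :=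
      Ideal.pow_le_pow_right (by omega) hz1
    have heq : μ • gEl k R p q ab
        = Submodule.Quotient.mk ⟨μ * algebraMap (Ak k) R (eAm k ab.1 ab.2), hzp⟩ := by
      rw [gEl_spec k R p q hc]
      rfl
    rw [heq]
    exact mem_U k R p q hpq (q - (mdeg ab + 1)) (mdeg ab + 1) (by omega) (by omega) _ hz1 hzp
  · rw [show gEl k R p q ab = 0 from dif_neg hc, smul_zero]
    exact zero_mem _

lemma smul_span_mem (hpq : p ≤ q) {T : Set (ℕ × ℕ)}
    (hT : ∀ ab ∈ T, ∀ cd : ℕ × ℕ, mdeg ab < mdeg cd → cd ∈ T)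
    {μ : R} (hμ : μ ∈ mIdeal k R) {x : ModPQ k R p q}
    (hx : x ∈ Submodule.span k (gEl k R p q '' T)) :
    μ • x ∈ Submodule.span k (gEl k R p q '' T) := by
  induction hx using Submodule.span_induction with
  | mem y hy =>
    obtain ⟨ab, habT, rfl⟩ := hy
    have h1 := smul_gEl_mem k R p q hpq hμ ab
    refine (?_ : UU k R p q (mdeg ab + 1) ≤ _) h1
    rw [UU]
    refine Submodule.span_mono (Set.image_mono ?_)
    intro cd hcd
    exact hT ab habT cd (by exact hcd)
  | zero => rw [smul_zero]; exact zero_mem _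
  | add y z hy hz ihy ihz => rw [smul_add]; exact add_mem ihy ihz
  | smul c y hy ihy =>
    have h1 : μ • c • y = c • μ • y := by
      rw [← algebraMap_smul R c y, ← algebraMap_smul R c (μ • y),
        smul_smul, smul_smul, mul_comm]
    rw [h1]
    exact Submodule.smul_mem _ _ ihy

noncomputable def chainSub (T : Set (ℕ × ℕ))
    (hT : ∀ ab ∈ T, ∀ cd : ℕ × ℕ, mdeg ab < mdeg cd → cd ∈ T) (hpq : p ≤ q) :
    Submodule R (ModPQ k R p q) where
  carrier := ↑(Submodule.span k (gEl k R p q '' T))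
  add_mem' := by intro a b ha hb; exact add_mem ha hb
  zero_mem' := zero_mem _
  smul_mem' := by
    intro r x hx
    obtain ⟨c, hc⟩ := residue_decomp (k := k) (R := R) r
    set μ := r - algebraMap (Ak k) R (algebraMap k (Ak k) c) with hμ
    have hr : r • x = c • x + μ • x := by
      have h2 : (algebraMap k R c) • x = c • x := algebraMap_smul R c x
      rw [← h2, ← add_smul]
      congr 1
      rw [hμ, IsScalarTower.algebraMap_apply k (Ak k) R]
      ring
    rw [hr]
    exact add_mem (Submodule.smul_mem _ _ hx) (smul_span_mem k R p q hpq hT hc hx)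

lemma chainSub_congr {T T' : Set (ℕ × ℕ)} {hT hT'} (hpq : p ≤ q) (h : T = T') :
    chainSub k R p q T hT hpq = chainSub k R p q T' hT' hpq := by
  subst h
  rfl

lemma chainSub_le {T T' : Set (ℕ × ℕ)} {hT hT'} (hpq : p ≤ q) (h : T ⊆ T') :
    chainSub k R p q T hT hpq ≤ chainSub k R p q T' hT' hpq := by
  intro x hx
  exact Submodule.span_mono (Set.image_mono h) hx

/-- Partial level sets. -/
def Tset (j s : ℕ) : Set (ℕ × ℕ) :=
  {ab | j + 1 ≤ mdeg ab} ∪ {ab | mdeg ab = j ∧ ab.2 < (if s = 0 then 0 else s + 1)}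

def Thigh (j : ℕ) : Set (ℕ × ℕ) := {ab | j ≤ mdeg ab}

lemma Tset_up (j s : ℕ) : ∀ ab ∈ Tset j s, ∀ cd : ℕ × ℕ, mdeg ab < mdeg cd → cd ∈ Tset j s := by
  rintro ab (hab | hab) cd hcd
  · exact Or.inl (by simp only [Set.mem_setOf_eq] at hab ⊢; omega)
  · exact Or.inl (by simp only [Set.mem_setOf_eq] at hab ⊢; omega)

lemma Thigh_up (j : ℕ) : ∀ ab ∈ Thigh j, ∀ cd : ℕ × ℕ, mdeg ab < mdeg cd → cd ∈ Thigh j := by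
  intro ab hab cd hcd
  simp only [Thigh, Set.mem_setOf_eq] at hab ⊢
  omega

lemma Tset_zero (j : ℕ) : Tset j 0 = Thigh (j + 1) := by
  ext ab
  simp only [Tset, Thigh, Set.mem_union, Set.mem_setOf_eq, reduceIte]
  omega

lemma Tset_last (j : ℕ) : Tset j (2 * j + 1) = Thigh j := by
  ext ab
  have hb : ab.2 / 2 ≤ mdeg ab := by unfold mdeg; omega
  simp only [Tset, Thigh, Set.mem_union, Set.mem_setOf_eq,
    if_neg (by omega : ¬ (2 * j + 1 = 0))]
  unfold mdeg at *
  omega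

/-- The new pair added at step `s`. -/
def newPair (j s : ℕ) : ℕ × ℕ := if s = 0 then (j, 0) else (j - (s + 1) / 2, s + 1)

lemma newPair_mdeg {j s : ℕ} (hs : s < 2 * j + 1) : mdeg (newPair j s) = j := by
  unfold newPair mdeg
  by_cases h0 : s = 0
  · simp [h0]
  · rw [if_neg h0]
    simp only
    omega

lemma newPair_snd_ne_one (j s : ℕ) : (newPair j s).2 ≠ 1 := by
  unfold newPair
  by_cases h0 : s = 0
  · rw [if_pos h0]; simp
  · rw [if_neg h0]; simp; omega

lemma newPair_mem_next {j s : ℕ} (hs : s < 2 * j + 1) :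
    newPair j s ∈ Tset j (s + 1) := by
  refine Or.inr ⟨newPair_mdeg hs, ?_⟩
  show (newPair j s).2 < if s + 1 = 0 then 0 else s + 1 + 1
  rw [if_neg (by omega : ¬ (s + 1 = 0))]
  unfold newPair
  by_cases h0 : s = 0
  · rw [if_pos h0]; simp
  · rw [if_neg h0]; simp

lemma newPair_not_mem {j s : ℕ} (hs : s < 2 * j + 1) : newPair j s ∉ Tset j s := by
  rintro (h | h)
  · simp only [Set.mem_setOf_eq, newPair_mdeg hs] at h
    omega
  · obtain ⟨-, h2⟩ := h
    unfold newPair at h2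
    by_cases h0 : s = 0
    · rw [if_pos h0, if_pos h0] at h2
      simp only at h2
      omega
    · rw [if_neg h0, if_neg h0] at h2
      simp only at h2
      omega

lemma chain_step (hpq : p ≤ q) {j s : ℕ} (hpj : p ≤ j) (hjq : j < q) (hs : s < 2 * j + 1) :
    chainSub k R p q (Tset j s) (Tset_up j s) hpq
      < chainSub k R p q (Tset j (s + 1)) (Tset_up j (s + 1)) hpq := by
  refine lt_of_le_of_ne (chainSub_le k R p q hpq ?_) ?_
  · intro ab hab
    rcases hab with h | h
    · exact Or.inl h
    · refine Or.inr ⟨h.1, lt_of_lt_of_le h.2 ?_⟩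
      rw [if_neg (by omega : ¬ (s + 1 = 0))]
      split_ifs <;> omega
  · intro heq
    have hmemD : newPair j s ∈ Dfin q \ Dfin p :=
      mem_Dfin_sdiff.mpr ⟨newPair_snd_ne_one j s, by rw [newPair_mdeg hs]; omega,
        by rw [newPair_mdeg hs]; omega⟩
    have hvin : gEl k R p q (newPair j s)
        ∈ chainSub k R p q (Tset j (s + 1)) (Tset_up j (s + 1)) hpq := by
      show _ ∈ Submodule.span k (gEl k R p q '' Tset j (s + 1))
      exact Submodule.subset_span ⟨newPair j s, newPair_mem_next hs, rfl⟩
    rw [← heq] at hvin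
    have hvnotin : gEl k R p q (newPair j s)
        ∉ Submodule.span k (gEl k R p q '' Tset j s) := by
      have hTp : ∀ ab ∈ Tset j s, p ≤ mdeg ab := by
        rintro ab (h | h) <;> simp only [Set.mem_setOf_eq] at h <;> omega
      rw [span_gEl_eq k R p q _ hTp]
      have hni : (⟨newPair j s, hmemD⟩ : ↥(Dfin q \ Dfin p))
          ∉ {i : ↥(Dfin q \ Dfin p) | i.1 ∈ Tset j s} := by
        simp only [Set.mem_setOf_eq]
        exact newPair_not_mem hs
      exact (gEl_li k R p q hpq).notMem_span_image hni
    exact hvnotin hvin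

noncomputable def levelSeries (hpq : p ≤ q) (j : ℕ) (hpj : p ≤ j) (hjq : j < q) :
    LTSeries (Submodule R (ModPQ k R p q)) where
  length := 2 * j + 1
  toFun := fun s => chainSub k R p q (Tset j s.1) (Tset_up j s.1) hpq
  step := fun i => chain_step k R p q hpq hpj hjq i.2

lemma chain_exists (hpq : p ≤ q) : ∀ d, d ≤ q - p →
    ∃ c : LTSeries (Submodule R (ModPQ k R p q)),
      c.length = q ^ 2 - (q - d) ^ 2 ∧
      c.last = chainSub k R p q (Thigh (q - d)) (Thigh_up (q - d)) hpq := by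
  intro d
  induction d with
  | zero =>
    intro _
    refine ⟨RelSeries.singleton _ (chainSub k R p q (Thigh (q - 0)) (Thigh_up _) hpq), ?_, ?_⟩
    · simp
    · rfl
  | succ d ih =>
    intro hd
    obtain ⟨c, hlen, hlast⟩ := ih (by omega)
    set j := q - (d + 1) with hj
    have hqd : q - d = j + 1 := by omega
    have hpj : p ≤ j := by omega
    have hjq : j < q := by omega
    have hTT : Thigh (q - d) = Tset j 0 := by
      rw [hqd]
      exact (Tset_zero j).symm
    have hconnect : c.last = (levelSeries k R p q hpq j hpj hjq).head := by
      rw [hlast]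
      show _ = chainSub k R p q (Tset j 0) (Tset_up j 0) hpq
      exact chainSub_congr k R p q hpq hTT
    refine ⟨c.smash (levelSeries k R p q hpq j hpj hjq) hconnect, ?_, ?_⟩
    · show c.length + (2 * j + 1) = _
      rw [hlen, hqd]
      have h1 : (j + 1) ^ 2 = j ^ 2 + 2 * j + 1 := by ring
      have h2 : (j + 1) ^ 2 ≤ q ^ 2 := Nat.pow_le_pow_left (by omega) 2
      have h3 : j ^ 2 ≤ (j + 1) ^ 2 := Nat.pow_le_pow_left (by omega) 2
      omega
    · rw [RelSeries.last_smash]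
      show chainSub k R p q (Tset j (2 * j + 1)) (Tset_up j (2 * j + 1)) hpq = _
      exact chainSub_congr k R p q hpq (Tset_last j)

lemma main_krull (hpq : p ≤ q) :
    Order.krullDim (Submodule R (ModPQ k R p q)) = ((q ^ 2 - p ^ 2 : ℕ) : WithBot ℕ∞) := by
  haveI : Module.Finite k (ModPQ k R p q) := Module.Finite.of_basis (gBasis k R p q hpq)
  obtain ⟨c, hlen, -⟩ := chain_exists k R p q hpq (q - p) le_rfl
  have he : q - (q - p) = p := by omega
  rw [he] at hlen
  exact krullDim_submodule_eq _ (modPQ_finrank k R p q hpq) c hlen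

end Chain


end Helpers

open Module Submodule in
/-- Let `R = k[x,y²,y³]` localized at `(x,y²,y³)` with maximal ideal `m = (x,y²,y³)R` and
`J = (x,y²)R`.  Then for all `p ≥ 1` the `R/m`-vector space `m^p/m^{p+1}` has dimension
(= length) `2p+1`, and hence `λ_R(R/m^{t+1}) = (t+1)²` for all `t ≥ 0`. -/
theorem length_powers (k : Type*) [Field k] [(mA k).IsPrime]
    (R : Type*) [CommRing R] [Algebra (Ak k) R] [IsLocalization.AtPrime R (mA k)]
    (x y2 y3 : R)
    (hx : x = algebraMap (Ak k) R (xA k)) (hy2 : y2 = algebraMap (Ak k) R (y2A k))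
    (hy3 : y3 = algebraMap (Ak k) R (y3A k))
    (m J : Ideal R) (hm : m = Ideal.span {x, y2, y3}) (hJ : J = Ideal.span {x, y2}) :
    (∀ p : ℕ, 1 ≤ p → quotLength (m ^ p) (m ^ (p + 1)) = ((2 * p + 1 : ℕ) : WithBot ℕ∞)) ∧
    (∀ t : ℕ, quotLength (⊤ : Ideal R) (m ^ (t + 1)) = (((t + 1) ^ 2 : ℕ) : WithBot ℕ∞)) := by
  letI : Algebra k R := ((algebraMap (Ak k) R).comp (algebraMap k (Ak k))).toAlgebra
  haveI : IsScalarTower k (Ak k) R := IsScalarTower.of_algebraMap_eq fun c => rfl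
  have hmap : m = mIdeal k R := by
    rw [hm, hx, hy2, hy3]
    show _ = Ideal.map (algebraMap (Ak k) R) (Ideal.span {xA k, y2A k, y3A k})
    rw [Ideal.map_span]
    congr 1
    simp [Set.image_insert_eq]
  constructor
  · intro p hp
    rw [hmap]
    show Order.krullDim (Submodule R (ModPQ k R p (p + 1))) = ((2 * p + 1 : ℕ) : WithBot ℕ∞)
    have harith : (p + 1) ^ 2 - p ^ 2 = 2 * p + 1 := by
      have h1 : (p + 1) ^ 2 = p ^ 2 + 2 * p + 1 := by ring
      omega
    rw [show ((2 * p + 1 : ℕ) : WithBot ℕ∞) = (((p + 1) ^ 2 - p ^ 2 : ℕ) : WithBot ℕ∞) from by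
      rw [harith]]
    exact main_krull k R p (p + 1) (by omega)
  · intro t
    rw [hmap, show (⊤ : Ideal R) = mIdeal k R ^ 0 from by rw [pow_zero, Ideal.one_eq_top]]
    show Order.krullDim (Submodule R (ModPQ k R 0 (t + 1))) = (((t + 1) ^ 2 : ℕ) : WithBot ℕ∞)
    rw [show (((t + 1) ^ 2 : ℕ) : WithBot ℕ∞) = (((t + 1) ^ 2 - 0 ^ 2 : ℕ) : WithBot ℕ∞) from by
      norm_num]
    exact main_krull k R 0 (t + 1) (by omega)
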